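/- The two-boson NSSR-preserving entanglement entropy E = −|r₁l₂|²log₂(|r₁l₂|²/(|r₁l₂|²+|l₁r₂|²)) − |l₁r₂|²log₂(|l₁r₂|²/(|r₁l₂|²+|l₁r₂|²)), subject to |r₁|²+|l₁|²=1 and |r₂|²+|l₂|²=1, is at most 1/2, with equality when |r₁|=|r₂|=|l₁|=|l₂|=1/√2; and E = 0 if any of r₁, r₂, l₁, l₂ is zero. -/
import Mathlib


open Real

set_option maxHeartbeats 1000000

/-- Core inequality in natural logarithms: the unnormalized two-outcome entropy
`a·ln((a+b)/a) + b·ln((a+b)/b)` is at most `½·ln 2` provided `2√(ab) ≤ 1-(a+b)`. -/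
lemma bosonEntropy_key_aux (a b : ℝ) (ha : 0 < a) (hb : 0 < b)
    (hab : 2 * Real.sqrt (a*b) ≤ 1 - (a+b)) :
    -(a * Real.log (a/(a+b))) - b * Real.log (b/(a+b)) ≤ 1/2 * Real.log 2 := by
  have hs : (0:ℝ) < a + b := by linarith
  obtain ⟨sa, hsa0, hsa2, la⟩ : ∃ sa, 0 < sa ∧ sa^2 = a ∧ Real.log a = 2 * Real.log sa := by
    refine ⟨Real.sqrt a, Real.sqrt_pos.2 ha, Real.sq_sqrt ha.le, ?_⟩
    rw [Real.log_sqrt ha.le]; ring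
  obtain ⟨sb, hsb0, hsb2, lb⟩ : ∃ sb, 0 < sb ∧ sb^2 = b ∧ Real.log b = 2 * Real.log sb := by
    refine ⟨Real.sqrt b, Real.sqrt_pos.2 hb, Real.sq_sqrt hb.le, ?_⟩
    rw [Real.log_sqrt hb.le]; ring
  obtain ⟨ss, hss0, hss2, ls⟩ : ∃ ss, 0 < ss ∧ ss^2 = a + b ∧
      Real.log (a+b) = 2 * Real.log ss := by
    refine ⟨Real.sqrt (a+b), Real.sqrt_pos.2 hs, Real.sq_sqrt hs.le, ?_⟩
    rw [Real.log_sqrt hs.le]; ring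
  have hmul : Real.sqrt (a*b) = sa * sb := by
    rw [← hsa2, ← hsb2, ← mul_pow]
    exact Real.sqrt_sq (by positivity)
  obtain ⟨M, hM0, hMss⟩ : ∃ M, 0 < M ∧ M * ss = sa + sb :=
    ⟨(sa + sb)/ss, by positivity, by field_simp⟩
  -- Jensen step (tangent-line form)
  have key1 : Real.log ss - Real.log sa ≤ Real.log M + ss/(sa*M) - 1 := by
    have h1 := Real.log_le_sub_one_of_pos (show 0 < ss/(sa*M) by positivity)
    rw [Real.log_div hss0.ne' (by positivity), Real.log_mul hsa0.ne' hM0.ne'] at h1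
    linarith
  have key2 : Real.log ss - Real.log sb ≤ Real.log M + ss/(sb*M) - 1 := by
    have h1 := Real.log_le_sub_one_of_pos (show 0 < ss/(sb*M) by positivity)
    rw [Real.log_div hss0.ne' (by positivity), Real.log_mul hsb0.ne' hM0.ne'] at h1
    linarith
  have ea : a * (ss/(sa*M)) = sa*ss/M := by
    rw [← hsa2]; field_simp
  have eb : b * (ss/(sb*M)) = sb*ss/M := by
    rw [← hsb2]; field_simp
  have esum : sa*ss/M + sb*ss/M = a + b := by
    rw [← hss2]
    field_simp
    nlinarith [hMss]
  have main : -(a * Real.log (a/(a+b))) - b * Real.log (b/(a+b))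
      ≤ 2*(a+b)*Real.log M := by
    rw [Real.log_div ha.ne' hs.ne', Real.log_div hb.ne' hs.ne', la, lb, ls]
    have t1 : a * (Real.log ss - Real.log sa) ≤ a * (Real.log M + ss/(sa*M) - 1) :=
      mul_le_mul_of_nonneg_left key1 ha.le
    have t2 : b * (Real.log ss - Real.log sb) ≤ b * (Real.log M + ss/(sb*M) - 1) :=
      mul_le_mul_of_nonneg_left key2 hb.le
    have t1' : a * (Real.log M + ss/(sa*M) - 1) = a * Real.log M + sa*ss/M - a := by
      rw [← ea]; ring
    have t2' : b * (Real.log M + ss/(sb*M) - 1) = b * Real.log M + sb*ss/M - b := by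
      rw [← eb]; ring
    rw [t1'] at t1; rw [t2'] at t2
    linarith [t1, t2, esum]
  have hsumsq : (sa + sb)^2 = (a+b) + 2*Real.sqrt (a*b) := by
    rw [hmul, add_sq, hsa2, hsb2]; ring
  rcases le_or_gt (a+b) (1/2) with hhalf | hhalf
  · -- small total weight: M ≤ √2
    have hab2 : 2 * Real.sqrt (a*b) ≤ a + b := by
      rw [hmul]
      nlinarith [sq_nonneg (sa - sb), hsa2, hsb2]
    have hMle : M ≤ Real.sqrt 2 := by
      have h1 : (sa + sb)^2 ≤ 2*(a+b) := by rw [hsumsq]; linarith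
      have h2 : (Real.sqrt 2 * ss)^2 = 2*(a+b) := by
        rw [mul_pow, Real.sq_sqrt (by norm_num : (0:ℝ) ≤ 2), hss2]
      have h3 : (M*ss)^2 ≤ (Real.sqrt 2 * ss)^2 := by rw [hMss, h2]; exact h1
      have h4 : M * ss ≤ Real.sqrt 2 * ss := by
        calc M * ss = Real.sqrt ((M*ss)^2) := (Real.sqrt_sq (by positivity)).symm
          _ ≤ Real.sqrt ((Real.sqrt 2 * ss)^2) := Real.sqrt_le_sqrt h3
          _ = Real.sqrt 2 * ss := Real.sqrt_sq (by positivity)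
      exact le_of_mul_le_mul_right h4 hss0
    have hlogM : Real.log M ≤ 1/2 * Real.log 2 := by
      calc Real.log M ≤ Real.log (Real.sqrt 2) := Real.log_le_log hM0 hMle
        _ = Real.log 2 / 2 := Real.log_sqrt (by norm_num)
        _ = 1/2 * Real.log 2 := by ring
    have h2s : 2*(a+b)*Real.log M ≤ 2*(a+b)*(1/2*Real.log 2) :=
      mul_le_mul_of_nonneg_left hlogM (by positivity)
    have hlog2 : 0 < Real.log 2 := Real.log_pos one_lt_two
    have hlast : (a+b) * Real.log 2 ≤ (1/2) * Real.log 2 :=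
      mul_le_mul_of_nonneg_right hhalf hlog2.le
    linarith [main, h2s, hlast]
  · -- large total weight: sa + sb ≤ 1
    have hsum1 : M * ss ≤ 1 := by
      rw [hMss]
      have h1 : (sa + sb)^2 ≤ 1 := by rw [hsumsq]; linarith
      nlinarith [h1, hsa0, hsb0]
    have hMle : M ≤ 1/ss := by
      rw [le_div_iff₀ hss0]; exact hsum1
    have hlogM : Real.log M ≤ -(1/2) * Real.log (a+b) := by
      calc Real.log M ≤ Real.log (1/ss) := Real.log_le_log hM0 hMle
        _ = -Real.log ss := by rw [one_div, Real.log_inv]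
        _ = -(1/2) * Real.log (a+b) := by rw [ls]; ring
    have h2s : 2*(a+b)*Real.log M ≤ 2*(a+b)*(-(1/2)*Real.log (a+b)) :=
      mul_le_mul_of_nonneg_left hlogM (by positivity)
    have htan : Real.log (1/(2*(a+b))) ≤ 1/(2*(a+b)) - 1 :=
      Real.log_le_sub_one_of_pos (by positivity)
    have hlog2s : Real.log (2*(a+b)) = Real.log 2 + Real.log (a+b) :=
      Real.log_mul (by norm_num) hs.ne'
    rw [one_div, Real.log_inv, hlog2s] at htan
    have hlog2_le : Real.log 2 ≤ 1 := by
      have := Real.log_le_sub_one_of_pos (show (0:ℝ) < 2 by norm_num)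
      linarith
    have hfin : -((a+b) * Real.log (a+b)) ≤ 1/2 * Real.log 2 := by
      have h3 : -(Real.log 2 + Real.log (a+b)) ≤ (2*(a+b))⁻¹ - 1 := htan
      have h4 : (2*(a+b)) * -(Real.log 2 + Real.log (a+b)) ≤ (2*(a+b))*((2*(a+b))⁻¹ - 1) :=
        mul_le_mul_of_nonneg_left h3 (by positivity)
      have h5 : (2*(a+b))*((2*(a+b))⁻¹ - 1) = 1 - 2*(a+b) := by field_simp
      rw [h5] at h4
      have hprod : 0 ≤ (a + b - 1/2) * (1 - Real.log 2) :=
        mul_nonneg (by linarith) (by linarith)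
      nlinarith [h4, hprod]
    linarith [main, h2s, hfin]

/-- Core inequality in base-2 logarithms, allowing zero weights. -/
lemma bosonEntropy_key (a b : ℝ) (ha : 0 ≤ a) (hb : 0 ≤ b)
    (hab : 2 * Real.sqrt (a*b) ≤ 1 - (a+b)) :
    -(a * Real.logb 2 (a/(a+b))) - b * Real.logb 2 (b/(a+b)) ≤ 1/2 := by
  rcases ha.eq_or_lt with rfl | ha'
  · rcases hb.eq_or_lt with rfl | hb'
    · norm_num
    · rw [zero_add, div_self hb'.ne', Real.logb_one]
      norm_num
  · rcases hb.eq_or_lt with rfl | hb'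
    · rw [add_zero, div_self ha'.ne', Real.logb_one]
      norm_num
    · have hlog2 : (0:ℝ) < Real.log 2 := Real.log_pos one_lt_two
      have h := bosonEntropy_key_aux a b ha' hb' hab
      rw [Real.logb, Real.logb]
      rw [show -(a * (Real.log (a/(a+b)) / Real.log 2)) - b * (Real.log (b/(a+b)) / Real.log 2)
          = (-(a * Real.log (a/(a+b))) - b * Real.log (b/(a+b))) / Real.log 2 from by ring]
      rw [div_le_iff₀ hlog2]
      linarith

lemma bosonEntropy_aux_self (c : ℝ) : c * Real.logb 2 (c / c) = 0 := by
  rcases eq_or_ne c 0 with h | h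
  · simp [h]
  · rw [div_self h, Real.logb_one, mul_zero]

/-- The NSSR-preserving entanglement entropy of two bosons with opposite spins
and spatial amplitudes `r₁, r₂` (site X) and `l₁, l₂` (site Y). Terms with zero
coefficient are automatically `0`. -/
noncomputable def bosonEntropy (r₁ r₂ l₁ l₂ : ℂ) : ℝ :=
  - ‖r₁ * l₂‖ ^ 2 * Real.logb 2 (‖r₁ * l₂‖ ^ 2 / (‖r₁ * l₂‖ ^ 2 + ‖l₁ * r₂‖ ^ 2))
  - ‖l₁ * r₂‖ ^ 2 * Real.logb 2 (‖l₁ * r₂‖ ^ 2 / (‖r₁ * l₂‖ ^ 2 + ‖l₁ * r₂‖ ^ 2))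

/-- The two-boson NSSR-preserving entanglement entropy, subject to the
normalizations `|rᵢ|² + |lᵢ|² = 1`, is at most `1/2`, with equality when all
four amplitudes have modulus `1/√2`; and it vanishes if any one of
`r₁, r₂, l₁, l₂` is zero. -/
theorem bosonEntropy_max :
    (∀ r₁ r₂ l₁ l₂ : ℂ, ‖r₁‖ ^ 2 + ‖l₁‖ ^ 2 = 1 → ‖r₂‖ ^ 2 + ‖l₂‖ ^ 2 = 1 →
      bosonEntropy r₁ r₂ l₁ l₂ ≤ 1 / 2) ∧
    (∀ r₁ r₂ l₁ l₂ : ℂ, ‖r₁‖ = 1 / Real.sqrt 2 → ‖r₂‖ = 1 / Real.sqrt 2 →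
      ‖l₁‖ = 1 / Real.sqrt 2 → ‖l₂‖ = 1 / Real.sqrt 2 →
      bosonEntropy r₁ r₂ l₁ l₂ = 1 / 2) ∧
    (∀ r₁ r₂ l₁ l₂ : ℂ, (r₁ = 0 ∨ r₂ = 0 ∨ l₁ = 0 ∨ l₂ = 0) →
      bosonEntropy r₁ r₂ l₁ l₂ = 0) := by
  refine ⟨?_, ?_, ?_⟩
  · -- upper bound
    intro r₁ r₂ l₁ l₂ h1 h2
    have e1 : ‖r₁ * l₂‖ ^ 2 = ‖r₁‖^2 * ‖l₂‖^2 := by rw [norm_mul]; ring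
    have e2 : ‖l₁ * r₂‖ ^ 2 = ‖l₁‖^2 * ‖r₂‖^2 := by rw [norm_mul]; ring
    have ha : (0:ℝ) ≤ ‖r₁‖^2 * ‖l₂‖^2 := by positivity
    have hb : (0:ℝ) ≤ ‖l₁‖^2 * ‖r₂‖^2 := by positivity
    have hid : ‖r₁‖^2 * ‖r₂‖^2 + ‖l₁‖^2 * ‖l₂‖^2
        = 1 - (‖r₁‖^2 * ‖l₂‖^2 + ‖l₁‖^2 * ‖r₂‖^2) := by
      linear_combination (‖r₂‖^2 + ‖l₂‖^2) * h1 + h2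
    have hsqrt : 2 * Real.sqrt ((‖r₁‖^2 * ‖l₂‖^2) * (‖l₁‖^2 * ‖r₂‖^2))
        ≤ 1 - (‖r₁‖^2 * ‖l₂‖^2 + ‖l₁‖^2 * ‖r₂‖^2) := by
      rw [← hid]
      have hle : (‖r₁‖^2 * ‖l₂‖^2) * (‖l₁‖^2 * ‖r₂‖^2)
          ≤ ((‖r₁‖^2 * ‖r₂‖^2 + ‖l₁‖^2 * ‖l₂‖^2)/2)^2 := by
        nlinarith [sq_nonneg (‖r₁‖^2 * ‖r₂‖^2 - ‖l₁‖^2 * ‖l₂‖^2)]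
      have h := Real.sqrt_le_sqrt hle
      rw [Real.sqrt_sq (by positivity)] at h
      linarith
    have hk := bosonEntropy_key (‖r₁‖^2 * ‖l₂‖^2) (‖l₁‖^2 * ‖r₂‖^2) ha hb hsqrt
    unfold bosonEntropy
    rw [e1, e2]
    linarith [hk]
  · -- equality case
    intro r₁ r₂ l₁ l₂ h1 h2 h3 h4
    have hs2 : Real.sqrt 2 * Real.sqrt 2 = 2 := Real.mul_self_sqrt (by norm_num)
    have hs2' : Real.sqrt 2 ≠ 0 := by positivity
    have ha : ‖r₁ * l₂‖ ^ 2 = 1/4 := by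
      rw [norm_mul, h1, h4]; field_simp; nlinarith [hs2]
    have hb : ‖l₁ * r₂‖ ^ 2 = 1/4 := by
      rw [norm_mul, h3, h2]; field_simp; nlinarith [hs2]
    unfold bosonEntropy
    rw [ha, hb]
    norm_num
    rw [show (1:ℝ)/2 = 2⁻¹ by norm_num, Real.logb_inv]
    simp [Real.logb_self_eq_one]
    norm_num
  · -- vanishing cases
    intro r₁ r₂ l₁ l₂ h
    rcases h with rfl | rfl | rfl | rfl <;>
      simp [bosonEntropy, bosonEntropy_aux_self]
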